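/- Let (U,V) solve the Cauchy problem -(rU')' = r^{2N₂+1} e^V (r^{2N₁} e^U + 1), -(rV')' = r^{2N₁+1} e^U (r^{2N₂} e^V - 1), with U(0)=α₁, V(0)=α₂, U'(0)=V'(0)=0, and define F₂(r) = ∫₀^r t^{2N₁+1} e^{U(t)} (t^{2N₂} e^{V(t)} - 1) dt. Then F₂(r) < 2(N₁+N₂+1) for all r ≥ 0. -/

import Mathlib

open MeasureTheory Real intervalIntegral Set Filter Topology

/-!
With `e = t^(2N₁+2N₂+1) e^(U+V)`, the right-hand sides are `f₁ = e + t^(2N₂+1) e^V ≥ e`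
and `f₂ = e - t^(2N₁+1) e^U ≤ e`. Integrating the equations (the constants of integration
vanish because `U, V` are continuous at `0`) gives `r U' = -F₁`, `r V' = -F₂` with
`Fᵢ = ∫₀^r fᵢ`, so the Pohozaev quantity `H = r^(2N₁+2N₂+2) e^(U+V)` satisfies
`H' = e (κ - F₁ - F₂)`, `κ = 2(N₁+N₂+1)`. Writing `M = ∫₀^r e` and `β = M(r) - F₂(r) ≥ 0`,
on `[0, r]` we have `F₁ + F₂ ≥ 2M - β`, hence
`0 < H(r) ≤ ∫₀^r e (κ + β - 2M) = (κ + β) M(r) - M(r)²`, i.e. `F₂(r) = M(r) - β < κ`.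
-/

/-- `(U, V)` is a solution of the radial Cauchy problem (5.11) with data `(α₁, α₂)`. -/
def IsSolution (N₁ N₂ : ℕ) (α₁ α₂ : ℝ) (U V : ℝ → ℝ) : Prop :=
  ContinuousOn U (Set.Ici 0) ∧ ContinuousOn V (Set.Ici 0) ∧
  ContDiffOn ℝ 2 U (Set.Ioi 0) ∧ ContDiffOn ℝ 2 V (Set.Ioi 0) ∧
  U 0 = α₁ ∧ V 0 = α₂ ∧
  HasDerivWithinAt U 0 (Set.Ici 0) 0 ∧ HasDerivWithinAt V 0 (Set.Ici 0) 0 ∧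
  (∀ r > (0 : ℝ),
    deriv (fun s => s * deriv U s) r
      = -(r ^ (2 * N₂ + 1) * Real.exp (V r) * (r ^ (2 * N₁) * Real.exp (U r) + 1))) ∧
  (∀ r > (0 : ℝ),
    deriv (fun s => s * deriv V s) r
      = -(r ^ (2 * N₁ + 1) * Real.exp (U r) * (r ^ (2 * N₂) * Real.exp (V r) - 1)))

theorem eq_zero_of_tendsto_mul_deriv {W : ℝ → ℝ} {c : ℝ} (hWc : ContinuousOn W (Ici 0))
    (hWd : DifferentiableOn ℝ W (Ioi 0))
    (h : Tendsto (fun s => s * deriv W s) (𝓝[>] 0) (𝓝 c)) : c = 0 := by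
  -- Mean value theorem: `ξ W'(ξ) = (ξ / ε) (W ε - W 0)` for some `ξ ∈ (0, ε)`; this tends to `0`.
  have hslope : ∀ ε, ∃ ξ, 0 < ε → ξ ∈ Ioo 0 ε ∧ deriv W ξ = (W ε - W 0) / ε := by
    intro ε
    by_cases hε : 0 < ε
    · obtain ⟨ξ, hξ, hξW⟩ := exists_deriv_eq_slope W hε (hWc.mono Icc_subset_Ici_self)
        (hWd.mono Ioo_subset_Ioi_self)
      exact ⟨ξ, fun _ => ⟨hξ, by rwa [sub_zero] at hξW⟩⟩
    · exact ⟨0, fun h => absurd h hε⟩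
  choose ξ hξ using hslope
  have hξ_pos : ∀ᶠ ε in 𝓝[>] 0, ξ ε ∈ Ioo 0 ε :=
    eventually_nhdsWithin_of_forall fun ε hε => (hξ ε hε).1
  have hξ_lim : Tendsto ξ (𝓝[>] 0) (𝓝[>] 0) := by
    refine tendsto_nhdsWithin_iff.2 ⟨?_, hξ_pos.mono fun ε hε => hε.1⟩
    exact tendsto_of_tendsto_of_tendsto_of_le_of_le' tendsto_const_nhds
      (tendsto_nhdsWithin_of_tendsto_nhds tendsto_id)
      (hξ_pos.mono fun ε hε => hε.1.le) (hξ_pos.mono fun ε hε => hε.2.le)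
  have hW_lim : Tendsto (fun ε => |W ε - W 0|) (𝓝[>] 0) (𝓝 0) := by
    have := ((hWc 0 self_mem_Ici).mono Ioi_subset_Ici_self).tendsto.sub_const (W 0)
    simpa using this.abs
  refine tendsto_nhds_unique (h.comp hξ_lim) (squeeze_zero_norm' ?_ hW_lim)
  filter_upwards [self_mem_nhdsWithin] with ε hε
  obtain ⟨⟨hξ0, hξε⟩, hξW⟩ := hξ ε hε
  rw [Function.comp_apply, hξW, norm_mul, norm_div, Real.norm_eq_abs, Real.norm_eq_abs,
    Real.norm_eq_abs, abs_of_pos hξ0, abs_of_pos (show (0 : ℝ) < ε from hε), ← mul_div_assoc,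
    mul_div_right_comm]
  exact mul_le_of_le_one_left (abs_nonneg _) ((div_le_one hε).2 hξε.le)

theorem mul_deriv_eq_neg_integral {W f : ℝ → ℝ} (hWc : ContinuousOn W (Ici 0))
    (hW : ContDiffOn ℝ 2 W (Ioi 0)) (hf : ContinuousOn f (Ici 0))
    (heq : ∀ x > (0 : ℝ), deriv (fun s => s * deriv W s) x = -f x) {r : ℝ} (hr : 0 < r) :
    r * deriv W r = -∫ t in (0 : ℝ)..r, f t := by
  have hderiv : ∀ x > (0 : ℝ), HasDerivAt (fun s => s * deriv W s) (-f x) x := by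
    intro x hx
    have hW' : DifferentiableAt ℝ (deriv W) x :=
      ((hW.deriv_of_isOpen isOpen_Ioi (by norm_num)).differentiableOn one_ne_zero).differentiableAt
        (Ioi_mem_nhds hx)
    have hd : DifferentiableAt ℝ (fun s => s * deriv W s) x := differentiableAt_fun_id.fun_mul hW'
    simpa only [heq x hx] using hd.hasDerivAt
  have hfi : IntegrableOn f (uIcc 0 r) := by
    rw [uIcc_of_le hr.le]
    exact (hf.mono Icc_subset_Ici_self).integrableOn_Icc
  have hftc : ∀ a ∈ Ioo 0 r, a * deriv W a = r * deriv W r + ∫ t in a..r, f t := by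
    intro a ha
    have hsub : uIcc a r ⊆ uIcc 0 r := by
      rw [uIcc_of_le ha.2.le, uIcc_of_le hr.le]
      exact Icc_subset_Icc_left ha.1.le
    have hftc := integral_eq_sub_of_hasDerivAt
      (fun x hx => hderiv x (ha.1.trans_le (uIcc_of_le ha.2.le ▸ hx).1))
      (hfi.intervalIntegrable.mono_set hsub).neg
    rw [intervalIntegral.integral_neg] at hftc
    linarith
  have hlim : Tendsto (fun a => a * deriv W a) (𝓝[>] 0)
      (𝓝 (r * deriv W r + ∫ t in (0 : ℝ)..r, f t)) := by
    refine Tendsto.congr' ?_ (tendsto_const_nhds.add (g := fun a => ∫ t in a..r, f t) ?_)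
    · filter_upwards [Ioo_mem_nhdsGT hr] with a ha using (hftc a ha).symm
    · refine ((continuousOn_primitive_interval_left hfi) 0 left_mem_uIcc).tendsto.mono_left ?_
      rw [uIcc_of_le hr.le]
      exact nhdsWithin_le_of_mem (Icc_mem_nhdsGT hr)
  linarith [eq_zero_of_tendsto_mul_deriv hWc (hW.differentiableOn two_ne_zero) hlim]

theorem continuousOn_primitive_Icc {f : ℝ → ℝ} {a b : ℝ} (hab : a ≤ b)
    (hf : ContinuousOn f (Icc a b)) : ContinuousOn (fun x => ∫ t in a..x, f t) (Icc a b) := by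
  rw [← uIcc_of_le hab]
  exact continuousOn_primitive_interval (uIcc_of_le hab ▸ hf.integrableOn_Icc)

theorem integral_mul_integral_eq_sq_div_two {e : ℝ → ℝ} {a b : ℝ} (hab : a ≤ b)
    (he : ContinuousOn e (Icc a b)) :
    ∫ t in a..b, e t * ∫ s in a..t, e s = (∫ t in a..b, e t) ^ 2 / 2 := by
  have he_int : IntegrableOn e (uIcc a b) := by
    rw [uIcc_of_le hab]; exact he.integrableOn_Icc
  have hM : ContinuousOn (fun x => ∫ s in a..x, e s) (Icc a b) :=
    continuousOn_primitive_Icc hab he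
  have hderiv : ∀ x ∈ Ioo a b,
      HasDerivAt (fun y => (∫ s in a..y, e s) ^ 2 / 2) (e x * ∫ s in a..x, e s) x := by
    intro x hx
    have hx' : x ∈ uIcc a b := by rw [uIcc_of_le hab]; exact Ioo_subset_Icc_self hx
    have hM' := integral_hasDerivAt_right
      ((he_int.mono_set (uIcc_subset_uIcc_left hx')).intervalIntegrable)
      ((he.mono Ioo_subset_Icc_self).stronglyMeasurableAtFilter isOpen_Ioo x hx)
      (he.continuousAt (Icc_mem_nhds hx.1 hx.2))
    exact ((hM'.fun_pow 2).div_const 2).congr_deriv (by push_cast; ring)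
  rw [integral_eq_sub_of_hasDeriv_right_of_le hab ((hM.pow 2).div_const 2)
    (fun x hx => (hderiv x hx).hasDerivWithinAt)
    ((he.mul hM).intervalIntegrable_of_Icc hab)]
  simp

theorem integral_lt_of_pohozaev {e f₁ f₂ H : ℝ → ℝ} {κ a b : ℝ} (hab : a ≤ b)
    (he : ContinuousOn e (Icc a b)) (hf₁ : ContinuousOn f₁ (Icc a b))
    (hf₂ : ContinuousOn f₂ (Icc a b)) (he_nonneg : ∀ t ∈ Icc a b, 0 ≤ e t)
    (he_le : ∀ t ∈ Icc a b, e t ≤ f₁ t) (hle_e : ∀ t ∈ Icc a b, f₂ t ≤ e t)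
    (hH : ContinuousOn H (Icc a b)) (hH_lt : H a < H b)
    (hH' : ∀ t ∈ Ioo a b,
      HasDerivAt H (e t * (κ - (∫ s in a..t, f₁ s) - ∫ s in a..t, f₂ s)) t) :
    ∫ t in a..b, f₂ t < κ := by
  set M := fun t => ∫ s in a..t, e s with hM_def
  set F₁ := fun t => ∫ s in a..t, f₁ s
  set F₂ := fun t => ∫ s in a..t, f₂ s with hF₂_def
  set β := ∫ s in a..b, (e s - f₂ s)
  have hintegrable {g : ℝ → ℝ} (hg : ContinuousOn g (Icc a b)) {t : ℝ} (ht : t ∈ Icc a b) :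
      IntervalIntegrable g volume a t :=
    (hg.mono (Icc_subset_Icc_right ht.2)).intervalIntegrable_of_Icc ht.1
  have hF₂_eq {t : ℝ} (ht : t ∈ Icc a b) : F₂ t = M t - ∫ s in a..t, (e s - f₂ s) := by
    simp only [hF₂_def, hM_def,
      intervalIntegral.integral_sub (hintegrable he ht) (hintegrable hf₂ ht), sub_sub_cancel]
  have hF₁_ge {t : ℝ} (ht : t ∈ Icc a b) : M t ≤ F₁ t :=
    integral_mono_on ht.1 (hintegrable he ht) (hintegrable hf₁ ht) fun s hs =>
      he_le s ⟨hs.1, hs.2.trans ht.2⟩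
  have hF₂_ge {t : ℝ} (ht : t ∈ Icc a b) : M t - β ≤ F₂ t := by
    rw [hF₂_eq ht]
    have hnn : 0 ≤ᵐ[volume.restrict (Ioc a b)] fun s => e s - f₂ s :=
      (ae_restrict_mem measurableSet_Ioc).mono fun s hs =>
        sub_nonneg.2 (hle_e s (Ioc_subset_Icc_self hs))
    linarith [integral_mono_interval le_rfl ht.1 ht.2 hnn
      ((he.sub hf₂).intervalIntegrable_of_Icc hab)]
  have hM_cont : ContinuousOn M (Icc a b) := continuousOn_primitive_Icc hab he
  have hlhs_cont : ContinuousOn (fun t => e t * (κ - F₁ t - F₂ t)) (Icc a b) :=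
    he.mul ((continuousOn_const.sub (continuousOn_primitive_Icc hab hf₁)).sub
      (continuousOn_primitive_Icc hab hf₂))
  have hκe_cont : ContinuousOn (fun t => (κ + β) * e t) (Icc a b) := continuousOn_const.mul he
  have heM_cont : ContinuousOn (fun t => 2 * (e t * M t)) (Icc a b) :=
    continuousOn_const.mul (he.mul hM_cont)
  have hbound : H b - H a ≤ (κ + β) * M b - M b ^ 2 :=
    calc H b - H a = ∫ t in a..b, e t * (κ - F₁ t - F₂ t) :=
          (integral_eq_sub_of_hasDeriv_right_of_le hab hH
            (fun t ht => (hH' t ht).hasDerivWithinAt)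
            (hlhs_cont.intervalIntegrable_of_Icc hab)).symm
      _ ≤ ∫ t in a..b, ((κ + β) * e t - 2 * (e t * M t)) :=
          integral_mono_on hab (hlhs_cont.intervalIntegrable_of_Icc hab)
            ((hκe_cont.sub heM_cont).intervalIntegrable_of_Icc hab)
            fun t ht => by nlinarith [he_nonneg t ht, hF₁_ge ht, hF₂_ge ht]
      _ = (κ + β) * M b - M b ^ 2 := by
          rw [intervalIntegral.integral_sub
              (hκe_cont.intervalIntegrable_of_Icc hab) (heM_cont.intervalIntegrable_of_Icc hab),
            intervalIntegral.integral_const_mul, intervalIntegral.integral_const_mul,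
            integral_mul_integral_eq_sq_div_two hab he]
          ring
  have hM_nonneg : 0 ≤ M b := integral_nonneg hab he_nonneg
  have hM_lt : M b < κ + β := by nlinarith
  have hF₂b : F₂ b = M b - β := hF₂_eq (right_mem_Icc.2 hab)
  linarith

theorem hasDerivAt_pow_succ_mul_exp_add {U V : ℝ → ℝ} {x a b : ℝ} (n : ℕ)
    (hU : HasDerivAt U a x) (hV : HasDerivAt V b x) :
    HasDerivAt (fun t => t ^ (n + 1) * exp (U t + V t))
      (x ^ n * exp (U x + V x) * (n + 1 + x * a + x * b)) x :=
  ((hasDerivAt_pow (n + 1) x).mul (hU.fun_add hV).exp).congr_deriv (by push_cast; ring)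

theorem stmt10 (N₁ N₂ : ℕ) (α₁ α₂ : ℝ) (U V : ℝ → ℝ)
    (hsol : IsSolution N₁ N₂ α₁ α₂ U V) :
    ∀ r : ℝ, 0 ≤ r →
      (∫ t in (0 : ℝ)..r,
          t ^ (2 * N₁ + 1) * Real.exp (U t) * (t ^ (2 * N₂) * Real.exp (V t) - 1))
        < 2 * (N₁ + N₂ + 1) := by
  obtain ⟨hUc, hVc, hUd, hVd, -, -, -, -, hU, hV⟩ := hsol
  intro r hr
  rcases hr.eq_or_lt with rfl | hr
  · simp only [integral_same]
    positivity
  have hUr : ContinuousOn U (Icc 0 r) := hUc.mono Icc_subset_Ici_self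
  have hVr : ContinuousOn V (Icc 0 r) := hVc.mono Icc_subset_Ici_self
  refine integral_lt_of_pohozaev (e := fun t => t ^ (2 * N₁ + 2 * N₂ + 1) * exp (U t + V t))
    (f₁ := fun t => t ^ (2 * N₂ + 1) * exp (V t) * (t ^ (2 * N₁) * exp (U t) + 1))
    (H := fun t => t ^ (2 * N₁ + 2 * N₂ + 1 + 1) * exp (U t + V t)) hr.le
    (by fun_prop) (by fun_prop) (by fun_prop) (fun t ht => by have := ht.1; positivity)
    (fun t ht => ?_) (fun t ht => ?_) (by fun_prop) ?_ (fun x hx => ?_)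
  · have hgap : 0 ≤ t ^ (2 * N₂ + 1) * exp (V t) := by have := ht.1; positivity
    rw [exp_add]
    linear_combination hgap
  · have hgap : 0 ≤ t ^ (2 * N₁ + 1) * exp (U t) := by have := ht.1; positivity
    rw [exp_add]
    linear_combination hgap
  · simp only [zero_pow (Nat.succ_ne_zero _), zero_mul]
    positivity
  · have hU' := (hUd.differentiableOn two_ne_zero).differentiableAt (Ioi_mem_nhds hx.1)
    have hV' := (hVd.differentiableOn two_ne_zero).differentiableAt (Ioi_mem_nhds hx.1)
    refine (hasDerivAt_pow_succ_mul_exp_add _ hU'.hasDerivAt hV'.hasDerivAt).congr_deriv ?_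
    rw [mul_deriv_eq_neg_integral hUc hUd (by fun_prop) hU hx.1,
      mul_deriv_eq_neg_integral hVc hVd (by fun_prop) hV hx.1]
    push_cast
    ring
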